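/- The chromatic number of the k-th power of the infinite triangular grid equals ⌈3(k+1)^2/4⌉ for every k ≥ 1. -/

import Mathlib

/-- The infinite triangular grid. -/
def triGrid : SimpleGraph (ℤ × ℤ) where
  Adj u v := (u.1 - v.1).natAbs + (u.2 - v.2).natAbs = 1 ∨
    (u.1 - v.1 = 1 ∧ u.2 - v.2 = -1) ∨ (u.1 - v.1 = -1 ∧ u.2 - v.2 = 1)
  symm := ⟨by intro u v h; omega⟩
  loopless := ⟨by intro u h; omega⟩

/-- The `k`-th power of a graph. -/
def graphPow {V : Type*} (G : SimpleGraph V) (k : ℕ) : SimpleGraph V where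
  Adj u v := u ≠ v ∧ G.dist u v ≤ k
  symm := ⟨by
    intro u v h
    exact ⟨h.1.symm, by rw [SimpleGraph.dist_comm]; exact h.2⟩⟩
  loopless := ⟨by intro u h; exact h.1 rfl⟩


/-!
The graph distance of the triangular grid is the hexagonal norm `max (|a|, |b|, |a + b|)` of the
difference of the endpoints. For the upper bound, colour `ℤ²` by a homomorphism onto a finite group
whose kernel has no nonzero vector of norm `≤ k`: for `k = 2m` the lattice spanned by
`(2m + 1, -m)` and `(m, m + 1)`, of index `3m² + 3m + 1`; for `k = 2m + 1` the lattice
`(m + 1) • {(p, q) | 3 ∣ p + 2q}`, of index `3(m + 1)²`. For the lower bound, the hexagon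
`{(a, b) ∈ [0, k]² | t ≤ a + b ≤ t + k}` with `t = ⌊k/2⌋` has diameter `k`, and counting it as the
square minus two corner triangles shows it has exactly `⌈3(k + 1)²/4⌉` points.
-/

open Finset

namespace SimpleGraph

variable {V : Type*} {G : SimpleGraph V} {v : V} {d : V → ℕ}

theorem Walk.le_length_of_forall_adj_le_add_one (hv : d v = 0)
    (hadj : ∀ u w, G.Adj u w → d u ≤ d w + 1) {u : V} (p : G.Walk u v) : d u ≤ p.length := by
  induction p with
  | nil => simp [hv]
  | cons h p ih => rw [Walk.length_cons]; exact (hadj _ _ h).trans (by omega)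

theorem exists_walk_length_le_of_forall_exists_adj_lt
    (hdesc : ∀ u, u ≠ v → ∃ w, G.Adj u w ∧ d w < d u) (u : V) :
    ∃ p : G.Walk u v, p.length ≤ d u := by
  induction hu : d u using Nat.strong_induction_on generalizing u with
  | _ n ih =>
    by_cases huv : u = v
    · subst huv; exact ⟨.nil, by simp⟩
    obtain ⟨w, huw, hw⟩ := hdesc u huv
    obtain ⟨p, hp⟩ := ih (d w) (hu ▸ hw) w rfl
    exact ⟨.cons huw p, by rw [Walk.length_cons]; omega⟩

theorem dist_eq_of_adj_le_add_one_of_exists_adj_lt (hv : d v = 0)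
    (hadj : ∀ u w, G.Adj u w → d u ≤ d w + 1)
    (hdesc : ∀ u, u ≠ v → ∃ w, G.Adj u w ∧ d w < d u) (u : V) : G.dist u v = d u := by
  obtain ⟨p, hp⟩ := exists_walk_length_le_of_forall_exists_adj_lt hdesc u
  obtain ⟨q, hq⟩ := Reachable.exists_walk_length_eq_dist ⟨p⟩
  exact le_antisymm ((dist_le p).trans hp) (hq ▸ q.le_length_of_forall_adj_le_add_one hv hadj)

end SimpleGraph

def hexNorm (x : ℤ × ℤ) : ℕ := max (max x.1.natAbs x.2.natAbs) (x.1 + x.2).natAbs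

theorem hexNorm_smul (c : ℤ) (x : ℤ × ℤ) : hexNorm (c • x) = c.natAbs * hexNorm x := by
  simp only [hexNorm, Prod.smul_fst, Prod.smul_snd, smul_eq_mul, ← mul_add, Int.natAbs_mul,
    Nat.mul_max_mul_left]

theorem exists_triGrid_adj_hexNorm_lt {x : ℤ × ℤ} (hx : x ≠ 0) :
    ∃ e, triGrid.Adj e 0 ∧ hexNorm (x - e) < hexNorm x := by
  obtain ⟨a, b⟩ := x
  have hab : a = 0 → b ≠ 0 := by simpa using hx
  simp only [triGrid, hexNorm, Prod.fst_sub, Prod.snd_sub, Prod.fst_zero, Prod.snd_zero, sub_zero]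
  rcases lt_trichotomy a 0 with ha | ha | ha <;> rcases lt_trichotomy b 0 with hb | hb | hb
  all_goals first
    | exact ⟨(-1, 0), by omega⟩ | exact ⟨(1, 0), by omega⟩ | exact ⟨(0, -1), by omega⟩
    | exact ⟨(0, 1), by omega⟩ | exact ⟨(1, -1), by omega⟩ | exact ⟨(-1, 1), by omega⟩

theorem triGrid_dist (u v : ℤ × ℤ) : triGrid.dist u v = hexNorm (u - v) := by
  refine SimpleGraph.dist_eq_of_adj_le_add_one_of_exists_adj_lt (d := fun w => hexNorm (w - v))
    (by simp [hexNorm]) (fun u w h => ?_) (fun u hu => ?_) u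
  · simp only [triGrid, hexNorm, Prod.fst_sub, Prod.snd_sub] at h ⊢
    omega
  · obtain ⟨e, he, hlt⟩ := exists_triGrid_adj_hexNorm_lt (sub_ne_zero.2 hu)
    refine ⟨u - e, ?_, by rwa [sub_right_comm]⟩
    simp only [triGrid, Prod.fst_sub, Prod.snd_sub, Prod.fst_zero, Prod.snd_zero] at he ⊢
    omega

theorem graphPow_triGrid_adj {k : ℕ} {u v : ℤ × ℤ} :
    (graphPow triGrid k).Adj u v ↔ u ≠ v ∧ hexNorm (u - v) ≤ k := by
  simp only [graphPow, triGrid_dist]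

theorem colorable_graphPow_triGrid_of_addMonoidHom {A : Type*} [AddGroup A] [Fintype A] {k : ℕ}
    (f : ℤ × ℤ →+ A) (hf : ∀ x, f x = 0 → hexNorm x ≤ k → x = 0) :
    (graphPow triGrid k).Colorable (Fintype.card A) :=
  (SimpleGraph.Coloring.mk f fun {u v} huv hfuv => by
    rw [graphPow_triGrid_adj] at huv
    exact huv.1 (sub_eq_zero.1 (hf _ (by rw [map_sub, hfuv, sub_self]) huv.2))).colorable

theorem eq_zero_of_dvd_of_hexNorm_lt {n : ℤ} {x : ℤ × ℤ} (h₁ : n ∣ x.2)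
    (h₂ : 3 * n ∣ x.1 + 2 * x.2) (hx : hexNorm x < 2 * n.natAbs) : x = 0 := by
  obtain ⟨q, hq⟩ := h₁
  obtain ⟨r, hr⟩ := h₂
  have hx_eq : x = n • (3 * r - 2 * q, q) := by
    ext
    · simp only [Prod.smul_mk, smul_eq_mul]; linear_combination hr - 2 * hq
    · exact hq
  rw [hx_eq, hexNorm_smul] at hx
  have hp : hexNorm (3 * r - 2 * q, q) < 2 :=
    Nat.lt_of_mul_lt_mul_left (hx.trans_eq (mul_comm _ _))
  simp only [hexNorm] at hp
  rw [hx_eq, show 3 * r - 2 * q = 0 by omega, show q = 0 by omega, Prod.mk_zero_zero, smul_zero]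

theorem eq_zero_of_dvd_of_hexNorm_le {m : ℕ} {x : ℤ × ℤ}
    (h : 3 * (m : ℤ) ^ 2 + 3 * m + 1 ∣ x.1 - (3 * m + 1) * x.2) (hx : hexNorm x ≤ 2 * m) :
    x = 0 := by
  obtain ⟨a, b⟩ := x
  obtain ⟨t, ht⟩ := h
  simp only [hexNorm] at hx ht
  have hm : (0 : ℤ) ≤ m := m.cast_nonneg
  obtain ⟨ha₁, ha₂, hb₁, hb₂, hab₁, hab₂⟩ : -(2 * m : ℤ) ≤ a ∧ a ≤ 2 * m ∧
      -(2 * m : ℤ) ≤ b ∧ b ≤ 2 * m ∧ -(2 * m : ℤ) ≤ a + b ∧ a + b ≤ 2 * m := by omega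
  -- coordinates in the basis `(2m + 1, -m)`, `(m, m + 1)` of the kernel lattice
  obtain ⟨A, B, ha, hb⟩ : ∃ A B : ℤ, a = (2 * m + 1) * A + m * B ∧ b = -m * A + (m + 1) * B :=
    ⟨(m + 1) * t + b, m * t + b, by linear_combination ht, by ring⟩
  have hA : -2 < A ∧ A < 2 := by
    have : (3 * m ^ 2 + 3 * m + 1) * A = m * (a - b) + a := by rw [ha, hb]; ring
    constructor <;> nlinarith [mul_le_mul_of_nonneg_left ha₂ hm, mul_le_mul_of_nonneg_left ha₁ hm,
      mul_le_mul_of_nonneg_left hb₂ hm, mul_le_mul_of_nonneg_left hb₁ hm]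
  have hB : -2 < B ∧ B < 2 := by
    have : (3 * m ^ 2 + 3 * m + 1) * B = m * (a + b) + (m + 1) * b := by rw [ha, hb]; ring
    constructor <;> nlinarith [mul_le_mul_of_nonneg_left hab₂ hm, mul_le_mul_of_nonneg_left hab₁ hm,
      mul_le_mul_of_nonneg_left hb₂ hm, mul_le_mul_of_nonneg_left hb₁ hm]
  obtain ⟨hA₁, hA₂⟩ := hA
  obtain ⟨hB₁, hB₂⟩ := hB
  interval_cases A <;> interval_cases B <;> simp only [Prod.mk_eq_zero] <;> omega

theorem colorable_graphPow_triGrid_odd (n : ℕ) :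
    (graphPow triGrid (2 * n + 1)).Colorable (3 * (n + 1) ^ 2) := by
  let f : ℤ × ℤ →+ ZMod (n + 1) × ZMod (3 * (n + 1)) :=
    AddMonoidHom.mk' (fun x => ((x.2 : ZMod (n + 1)), ((x.1 + 2 * x.2 : ℤ) : ZMod (3 * (n + 1)))))
      fun x y => by ext <;> simp only [Prod.fst_add, Prod.snd_add] <;> push_cast <;> ring
  convert colorable_graphPow_triGrid_of_addMonoidHom f fun x hfx hx => ?_ using 1
  · simp only [Fintype.card_prod, ZMod.card]; ring
  simp only [f, AddMonoidHom.mk'_apply, Prod.mk_eq_zero, ZMod.intCast_zmod_eq_zero_iff_dvd] at hfx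
  exact eq_zero_of_dvd_of_hexNorm_lt (n := n + 1) (by exact_mod_cast hfx.1)
    (by exact_mod_cast hfx.2) (by omega)

theorem colorable_graphPow_triGrid_even (n : ℕ) :
    (graphPow triGrid (2 * n)).Colorable (3 * n ^ 2 + 3 * n + 1) := by
  let f : ℤ × ℤ →+ ZMod (3 * n ^ 2 + 3 * n + 1) :=
    AddMonoidHom.mk' (fun x => ((x.1 - (3 * n + 1) * x.2 : ℤ) : ZMod (3 * n ^ 2 + 3 * n + 1)))
      fun x y => by simp only [Prod.fst_add, Prod.snd_add]; push_cast; ring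
  convert colorable_graphPow_triGrid_of_addMonoidHom f fun x hfx hx => ?_ using 1
  · rw [ZMod.card]
  simp only [f, AddMonoidHom.mk'_apply, ZMod.intCast_zmod_eq_zero_iff_dvd] at hfx
  exact eq_zero_of_dvd_of_hexNorm_le (by exact_mod_cast hfx) hx

def hexagon (k t : ℕ) : Finset (ℕ × ℕ) :=
  {p ∈ range (k + 1) ×ˢ range (k + 1) | t ≤ p.1 + p.2 ∧ p.1 + p.2 ≤ t + k}

theorem two_mul_card_filter_add_lt {n s : ℕ} (hs : s ≤ n) :
    2 * #{p ∈ range n ×ˢ range n | p.1 + p.2 < s} = s * (s + 1) := by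
  have h : {p ∈ range n ×ˢ range n | p.1 + p.2 < s} = (range s).biUnion antidiagonal := by
    ext ⟨a, b⟩
    simp only [mem_filter, mem_product, mem_range, mem_biUnion, HasAntidiagonal.mem_antidiagonal]
    constructor
    · rintro ⟨-, h⟩; exact ⟨a + b, h, rfl⟩
    · rintro ⟨i, hi, rfl⟩; omega
  rw [h, card_biUnion fun i _ j _ hij => disjoint_left.2 fun p hi hj => hij <|
    (HasAntidiagonal.mem_antidiagonal.1 hi).symm.trans (HasAntidiagonal.mem_antidiagonal.1 hj)]
  simp only [Nat.card_antidiagonal]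
  have := sum_range_id_mul_two (s + 1)
  rw [sum_range_succ', add_zero, Nat.add_sub_cancel] at this
  linarith

theorem two_mul_card_hexagon {k t : ℕ} (ht : t ≤ k) :
    2 * #(hexagon k t) + t * (t + 1) + (k - t) * (k - t + 1) = 2 * (k + 1) ^ 2 := by
  have hlow := two_mul_card_filter_add_lt (n := k + 1) (s := t) (by omega)
  have hhigh := two_mul_card_filter_add_lt (n := k + 1) (s := k - t) (by omega)
  have hreflect : #{p ∈ range (k + 1) ×ˢ range (k + 1) | t + k < p.1 + p.2} =
      #{p ∈ range (k + 1) ×ˢ range (k + 1) | p.1 + p.2 < k - t} := by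
    refine card_nbij' (fun p => (k - p.1, k - p.2)) (fun p => (k - p.1, k - p.2)) ?_ ?_ ?_ ?_ <;>
      intro p <;>
      simp only [coe_filter, mem_product, mem_range, Set.mem_ofPred_eq, Prod.ext_iff] <;> omega
  have hcompl : {p ∈ range (k + 1) ×ˢ range (k + 1) | ¬(t ≤ p.1 + p.2 ∧ p.1 + p.2 ≤ t + k)} =
      {p ∈ range (k + 1) ×ˢ range (k + 1) | p.1 + p.2 < t ∨ t + k < p.1 + p.2} :=
    filter_congr fun _ _ => by omega
  have hsplit := card_filter_add_card_filter_not (s := range (k + 1) ×ˢ range (k + 1))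
    (fun p => t ≤ p.1 + p.2 ∧ p.1 + p.2 ≤ t + k)
  rw [hcompl, filter_or, card_union_of_disjoint (disjoint_filter.2 fun _ _ h₁ h₂ => by omega),
    card_product, card_range, hreflect] at hsplit
  rw [hexagon]
  linarith

theorem card_hexagon_even (m : ℕ) : #(hexagon (2 * m) m) = 3 * m ^ 2 + 3 * m + 1 := by
  have := two_mul_card_hexagon (k := 2 * m) (t := m) (by omega)
  rw [show 2 * m - m = m by omega] at this
  nlinarith

theorem card_hexagon_odd (m : ℕ) : #(hexagon (2 * m + 1) m) = 3 * (m + 1) ^ 2 := by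
  have := two_mul_card_hexagon (k := 2 * m + 1) (t := m) (by omega)
  rw [show 2 * m + 1 - m = m + 1 by omega] at this
  nlinarith

theorem isClique_hexagon (k t : ℕ) :
    (graphPow triGrid k).IsClique
      ((hexagon k t).map (Nat.castEmbedding.prodMap Nat.castEmbedding : ℕ × ℕ ↪ ℤ × ℤ)) := by
  rintro _ hu _ hv huv
  simp only [coe_map, hexagon, coe_filter, mem_product, mem_range, Set.mem_image,
    Set.mem_ofPred_eq] at hu hv
  obtain ⟨⟨a, b⟩, hab, rfl⟩ := hu
  obtain ⟨⟨c, d⟩, hcd, rfl⟩ := hv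
  rw [graphPow_triGrid_adj]
  refine ⟨huv, ?_⟩
  simp only [hexNorm, Function.Embedding.coe_prodMap, Prod.map_apply, Nat.castEmbedding_apply,
    Prod.fst_sub, Prod.snd_sub]
  omega

theorem chromaticNumber_triGrid_pow_general (k : ℕ) :
    (graphPow triGrid k).chromaticNumber = (((3 * (k + 1) ^ 2 + 3) / 4 : ℕ) : ℕ∞) := by
  obtain ⟨t, hcol, hcard⟩ : ∃ t, (graphPow triGrid k).Colorable ((3 * (k + 1) ^ 2 + 3) / 4) ∧
      #(hexagon k t) = (3 * (k + 1) ^ 2 + 3) / 4 := by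
    obtain ⟨m, rfl | rfl⟩ := Nat.even_or_odd' k
    · rw [show (3 * (2 * m + 1) ^ 2 + 3) / 4 = 3 * m ^ 2 + 3 * m + 1 by ring_nf; omega]
      exact ⟨m, colorable_graphPow_triGrid_even m, card_hexagon_even m⟩
    · rw [show (3 * (2 * m + 1 + 1) ^ 2 + 3) / 4 = 3 * (m + 1) ^ 2 by ring_nf; omega]
      exact ⟨m, colorable_graphPow_triGrid_odd m, card_hexagon_odd m⟩
  refine le_antisymm hcol.chromaticNumber_le ?_
  simpa only [card_map, hcard] using (isClique_hexagon k t).card_le_chromaticNumber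

/-- The chromatic number of the `k`-th power of the triangular grid is
`⌈3(k+1)^2 / 4⌉` (Sevcikova). -/
theorem chromaticNumber_triGrid_pow (k : ℕ) (hk : 1 ≤ k) :
    (graphPow triGrid k).chromaticNumber = (((3 * (k + 1) ^ 2 + 3) / 4 : ℕ) : ℕ∞) :=
  chromaticNumber_triGrid_pow_general k
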